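/- arXiv:math/9904149 — 4 statements merged into one kernel-verified Lean document; each statement's English description precedes it below -/
import Mathlib

section
/- There exists a universal constant M > 0 such that the following holds. Let l, T > 0, c ≥ 0, and let u, v, ψ : [0, T] × [−l, l] → ℝ be continuous, continuously differentiable in x, with ψ(t, −l) = ψ(t, l) = 0 for all t ∈ [0, T]. Then | ∫₀ᵀ ∫_I ( −u ∂ₓu + v ∂ₓv + c (u − v) ) ψ dx dt | ≤ M ( ‖u‖_E + ‖v‖_E + c (2 l T)^{1/4} ) ‖u − v‖_E ( ∫₀ᵀ ‖ψ(t,·)‖_{H¹(I)}² dt )^{1/2}. -/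
open Set intervalIntegral

namespace KSaux
open MeasureTheory

lemma memLp_of_continuousOn {f : ℝ × ℝ → ℝ} {s : Set (ℝ × ℝ)} (hs : IsCompact s)
    (hsm : MeasurableSet s) (hf : ContinuousOn f s) (p : ENNReal) :
    MemLp f p ((volume : Measure (ℝ × ℝ)).restrict s) := by
  haveI : IsFiniteMeasure ((volume : Measure (ℝ × ℝ)).restrict s) :=
    ⟨by rw [Measure.restrict_apply_univ]; exact hs.measure_lt_top⟩
  obtain ⟨C, hC⟩ := hs.exists_bound_of_continuousOn hf
  exact MemLp.of_bound (hf.aestronglyMeasurable hsm) C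
    ((ae_restrict_iff' hsm).2 (Filter.Eventually.of_forall hC))

lemma holder22 {α : Type*} [MeasurableSpace α] {μ : Measure α} {f g : α → ℝ}
    (hf : MemLp f (ENNReal.ofReal 2) μ) (hg : MemLp g (ENNReal.ofReal 2) μ) :
    ∫ x, |f x| * |g x| ∂μ ≤
      (∫ x, f x ^ 2 ∂μ) ^ ((1 : ℝ) / 2) * (∫ x, g x ^ 2 ∂μ) ^ ((1 : ℝ) / 2) := by
  have hpq : Real.HolderConjugate 2 2 := Real.HolderConjugate.two_two
  have h := MeasureTheory.integral_mul_norm_le_Lp_mul_Lq hpq hf hg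
  have habs : ∀ x : ℝ, |x| ^ (2 : ℝ) = x ^ 2 := by
    intro x
    rw [show (2 : ℝ) = ((2 : ℕ) : ℝ) by norm_num, Real.rpow_natCast, sq_abs]
  simp only [Real.norm_eq_abs] at h
  simp only [habs] at h
  exact h

end KSaux

open MeasureTheory in
set_option maxHeartbeats 4000000 in
/-- Lipschitz estimate, in the dual norm of `L²(0,T;H¹₀)`, for the
Kuramoto–Sivashinsky nonlinearity `G₀(u) = −u uₓ + c u`: there is a universal
constant `M > 0` such that for all `l, T > 0`, `c ≥ 0`, and all `u, v, ψ`
continuous on `[0,T] × [-l,l]` and continuously differentiable in `x`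
(with spatial derivatives `du, dv, dψ`), `ψ` vanishing at `x = ±l`,
`|∫₀ᵀ∫_I (−u uₓ + v vₓ + c(u − v)) ψ| ≤
  M (‖u‖_E + ‖v‖_E + c (2lT)^{1/4}) ‖u − v‖_E (∫₀ᵀ ‖ψ(t)‖_{H¹}² dt)^{1/2}`. -/
theorem stmt_5 :
    ∃ M : ℝ, 0 < M ∧ ∀ (l T c : ℝ), 0 < l → 0 < T → 0 ≤ c →
      ∀ (u du v dv ψ dψ : ℝ → ℝ → ℝ),
      ContinuousOn (fun p : ℝ × ℝ => u p.1 p.2) (Icc 0 T ×ˢ Icc (-l) l) →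
      (∀ t ∈ Icc (0 : ℝ) T, ∀ x ∈ Icc (-l) l, HasDerivAt (u t) (du t x) x) →
      ContinuousOn (fun p : ℝ × ℝ => du p.1 p.2) (Icc 0 T ×ˢ Icc (-l) l) →
      ContinuousOn (fun p : ℝ × ℝ => v p.1 p.2) (Icc 0 T ×ˢ Icc (-l) l) →
      (∀ t ∈ Icc (0 : ℝ) T, ∀ x ∈ Icc (-l) l, HasDerivAt (v t) (dv t x) x) →
      ContinuousOn (fun p : ℝ × ℝ => dv p.1 p.2) (Icc 0 T ×ˢ Icc (-l) l) →
      ContinuousOn (fun p : ℝ × ℝ => ψ p.1 p.2) (Icc 0 T ×ˢ Icc (-l) l) →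
      (∀ t ∈ Icc (0 : ℝ) T, ∀ x ∈ Icc (-l) l, HasDerivAt (ψ t) (dψ t x) x) →
      ContinuousOn (fun p : ℝ × ℝ => dψ p.1 p.2) (Icc 0 T ×ˢ Icc (-l) l) →
      (∀ t ∈ Icc (0 : ℝ) T, ψ t (-l) = 0 ∧ ψ t l = 0) →
      |∫ t in (0 : ℝ)..T, ∫ x in (-l)..l,
          (-(u t x * du t x) + v t x * dv t x + c * (u t x - v t x)) * ψ t x| ≤
        M * ((∫ t in (0 : ℝ)..T, ∫ x in (-l)..l, u t x ^ 4) ^ ((1 : ℝ) / 4) +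
              (∫ t in (0 : ℝ)..T, ∫ x in (-l)..l, v t x ^ 4) ^ ((1 : ℝ) / 4) +
              c * (2 * l * T) ^ ((1 : ℝ) / 4)) *
          (∫ t in (0 : ℝ)..T,
              ∫ x in (-l)..l, (u t x - v t x) ^ 4) ^ ((1 : ℝ) / 4) *
          (∫ t in (0 : ℝ)..T,
              ∫ x in (-l)..l, (ψ t x ^ 2 + dψ t x ^ 2)) ^ ((1 : ℝ) / 2) := by
  refine ⟨1, one_pos, ?_⟩
  intro l T c hl hT hc u du v dv ψ dψ hu hud hduc hv hvd hdvc hψ hψd hdψc hψ0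
  have hll : (-l) ≤ l := by linarith
  set s : Set (ℝ × ℝ) := Icc (0:ℝ) T ×ˢ Icc (-l) l with hs_def
  set sI : Set (ℝ × ℝ) := Ioc (0:ℝ) T ×ˢ Ioc (-l) l with hsI_def
  set μ : Measure (ℝ × ℝ) :=
    ((volume : Measure ℝ).restrict (Ioc 0 T)).prod ((volume : Measure ℝ).restrict (Ioc (-l) l))
    with hμ_def
  have hμ : μ = (volume : Measure (ℝ × ℝ)).restrict sI := by
    rw [hμ_def, Measure.prod_restrict, hsI_def, ← Measure.volume_eq_prod]
  have hs_cpt : IsCompact s := isCompact_Icc.prod isCompact_Icc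
  have hs_meas : MeasurableSet s := measurableSet_Icc.prod measurableSet_Icc
  have hsub : sI ⊆ s := prod_mono Ioc_subset_Icc_self Ioc_subset_Icc_self
  -- Memℒp from continuity
  have memLp : ∀ (F : ℝ × ℝ → ℝ), ContinuousOn F s → ∀ p : ENNReal, MemLp F p μ := by
    intro F hF p
    have h1 : MemLp F p ((volume : Measure (ℝ × ℝ)).restrict s) :=
      KSaux.memLp_of_continuousOn hs_cpt hs_meas hF p
    refine h1.mono_measure ?_
    rw [hμ]
    exact Measure.restrict_mono hsub le_rfl
  have integ : ∀ (F : ℝ × ℝ → ℝ), ContinuousOn F s → Integrable F μ := by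
    intro F hF
    exact memLp_one_iff_integrable.1 (memLp F hF 1)
  -- iterated interval integral = product integral
  have prod_eq : ∀ (F : ℝ × ℝ → ℝ), ContinuousOn F s →
      (∫ t in (0:ℝ)..T, ∫ x in (-l)..l, F (t, x)) = ∫ z, F z ∂μ := by
    intro F hF
    rw [MeasureTheory.integral_prod F (integ F hF)]
    rw [intervalIntegral.integral_of_le hT.le]
    refine setIntegral_congr_fun measurableSet_Ioc (fun t _ => ?_)
    rw [intervalIntegral.integral_of_le hll]
  -- shorthand functions
  set U : ℝ × ℝ → ℝ := fun z => u z.1 z.2 with hU_def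
  set V : ℝ × ℝ → ℝ := fun z => v z.1 z.2 with hV_def
  set Ψ : ℝ × ℝ → ℝ := fun z => ψ z.1 z.2 with hΨ_def
  set DΨ : ℝ × ℝ → ℝ := fun z => dψ z.1 z.2 with hDΨ_def
  -- continuity facts
  have hUc : ContinuousOn U s := hu
  have hVc : ContinuousOn V s := hv
  have hΨc : ContinuousOn Ψ s := hψ
  have hDΨc : ContinuousOn DΨ s := hdψc
  have hWc : ContinuousOn (fun z => U z - V z) s := hUc.sub hVc
  have hPc : ContinuousOn (fun z => (U z + V z) * (U z - V z)) s := (hUc.add hVc).mul hWc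
  -- section continuity helper
  have sec : ∀ (F : ℝ → ℝ → ℝ), ContinuousOn (fun p : ℝ × ℝ => F p.1 p.2) s →
      ∀ t ∈ Icc (0:ℝ) T, ContinuousOn (F t) (Icc (-l) l) := by
    intro F hF t ht
    have hmk : ContinuousOn (fun x : ℝ => ((t, x) : ℝ × ℝ)) (Icc (-l) l) :=
      (Continuous.prodMk_right t).continuousOn
    exact hF.comp hmk (fun x hx => mk_mem_prod ht hx)
  -- Step 1: integration by parts in x, for each t ∈ [0,T]
  set G : ℝ × ℝ → ℝ := fun z =>
      (U z ^ 2 - V z ^ 2) / 2 * DΨ z + c * ((U z - V z) * Ψ z) with hG_def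
  have hGc : ContinuousOn G s := by
    refine ContinuousOn.add ?_ ?_
    · exact (((hUc.pow 2).sub (hVc.pow 2)).div_const 2).mul hDΨc
    · exact continuousOn_const.mul (hWc.mul hΨc)
  have step1 : ∀ t ∈ uIcc (0:ℝ) T,
      (∫ x in (-l)..l, (-(u t x * du t x) + v t x * dv t x + c * (u t x - v t x)) * ψ t x)
        = ∫ x in (-l)..l, G (t, x) := by
    intro t ht
    rw [uIcc_of_le hT.le] at ht
    have hut := sec u hu t ht
    have hdut := sec du hduc t ht
    have hvt := sec v hv t ht
    have hdvt := sec dv hdvc t ht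
    have hψt := sec ψ hψ t ht
    have hdψt := sec dψ hdψc t ht
    have huIcc : uIcc (-l) l = Icc (-l) l := uIcc_of_le hll
    -- derivative of (u²-v²)/2
    have hF : ∀ x ∈ uIcc (-l) l,
        HasDerivAt (fun x => (u t x ^ 2 - v t x ^ 2) / 2)
          (u t x * du t x - v t x * dv t x) x := by
      intro x hx
      rw [huIcc] at hx
      have h1 := (hud t ht x hx).pow 2
      have h2 := (hvd t ht x hx).pow 2
      have h3 : HasDerivAt (fun x => (u t x ^ 2 - v t x ^ 2) / 2) _ x := (h1.sub h2).div_const 2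
      convert h3 using 1
      ring
    have hψ' : ∀ x ∈ uIcc (-l) l, HasDerivAt (ψ t) (dψ t x) x := by
      intro x hx; rw [huIcc] at hx; exact hψd t ht x hx
    have hInt1 : IntervalIntegrable (fun x => u t x * du t x - v t x * dv t x) volume (-l) l := by
      apply ContinuousOn.intervalIntegrable
      rw [huIcc]; exact (hut.mul hdut).sub (hvt.mul hdvt)
    have hInt2 : IntervalIntegrable (dψ t) volume (-l) l := by
      apply ContinuousOn.intervalIntegrable; rw [huIcc]; exact hdψt
    have ibp := intervalIntegral.integral_mul_deriv_eq_deriv_mul hF hψ' hInt1 hInt2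
    obtain ⟨hψl, hψr⟩ := hψ0 t ht
    rw [hψl, hψr, mul_zero, mul_zero, sub_zero, zero_sub] at ibp
    -- ibp : ∫ F * dψ = - ∫ F' * ψ
    have hsplit : (∫ x in (-l)..l,
        (-(u t x * du t x) + v t x * dv t x + c * (u t x - v t x)) * ψ t x)
        = (∫ x in (-l)..l, -((u t x * du t x - v t x * dv t x) * ψ t x))
          + ∫ x in (-l)..l, c * ((u t x - v t x) * ψ t x) := by
      rw [← intervalIntegral.integral_add]
      · apply intervalIntegral.integral_congr
        intro x _
        ring
      · apply ContinuousOn.intervalIntegrable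
        rw [huIcc]
        exact (((hut.mul hdut).sub (hvt.mul hdvt)).mul hψt).neg
      · apply ContinuousOn.intervalIntegrable
        rw [huIcc]
        exact continuousOn_const.mul ((hut.sub hvt).mul hψt)
    have hIa : IntervalIntegrable (fun x => (u t x ^ 2 - v t x ^ 2) / 2 * dψ t x)
        volume (-l) l := by
      apply ContinuousOn.intervalIntegrable
      rw [huIcc]
      exact (((hut.pow 2).sub (hvt.pow 2)).div_const 2).mul hdψt
    have hIb : IntervalIntegrable (fun x => c * ((u t x - v t x) * ψ t x)) volume (-l) l := by
      apply ContinuousOn.intervalIntegrable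
      rw [huIcc]
      exact continuousOn_const.mul ((hut.sub hvt).mul hψt)
    rw [hsplit, intervalIntegral.integral_neg, ← ibp, ← intervalIntegral.integral_add hIa hIb]
  -- rewrite the LHS as a product-measure integral
  have hLHS : (∫ t in (0:ℝ)..T, ∫ x in (-l)..l,
      (-(u t x * du t x) + v t x * dv t x + c * (u t x - v t x)) * ψ t x)
      = ∫ z, G z ∂μ := by
    rw [intervalIntegral.integral_congr step1]
    exact prod_eq G hGc
  -- rewrite the RHS integrals
  have hRu : (∫ t in (0:ℝ)..T, ∫ x in (-l)..l, u t x ^ 4) = ∫ z, U z ^ 4 ∂μ :=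
    prod_eq (fun z => U z ^ 4) (hUc.pow 4)
  have hRv : (∫ t in (0:ℝ)..T, ∫ x in (-l)..l, v t x ^ 4) = ∫ z, V z ^ 4 ∂μ :=
    prod_eq (fun z => V z ^ 4) (hVc.pow 4)
  have hRw : (∫ t in (0:ℝ)..T, ∫ x in (-l)..l, (u t x - v t x) ^ 4)
      = ∫ z, (U z - V z) ^ 4 ∂μ :=
    prod_eq (fun z => (U z - V z) ^ 4) (hWc.pow 4)
  have hRψ : (∫ t in (0:ℝ)..T, ∫ x in (-l)..l, (ψ t x ^ 2 + dψ t x ^ 2))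
      = ∫ z, (Ψ z ^ 2 + DΨ z ^ 2) ∂μ :=
    prod_eq (fun z => Ψ z ^ 2 + DΨ z ^ 2) ((hΨc.pow 2).add (hDΨc.pow 2))
  rw [hLHS, hRu, hRv, hRw, hRψ]
  -- nonnegativity of the basic integrals
  have hIu4 : 0 ≤ ∫ z, U z ^ 4 ∂μ := integral_nonneg (fun z => by positivity)
  have hIv4 : 0 ≤ ∫ z, V z ^ 4 ∂μ := integral_nonneg (fun z => by positivity)
  have hIw4 : 0 ≤ ∫ z, (U z - V z) ^ 4 ∂μ := integral_nonneg (fun z => by positivity)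
  have hIψ : 0 ≤ ∫ z, (Ψ z ^ 2 + DΨ z ^ 2) ∂μ := integral_nonneg (fun z => by positivity)
  set A : ℝ := (∫ z, U z ^ 4 ∂μ) ^ ((1 : ℝ) / 4) with hA_def
  set B : ℝ := (∫ z, V z ^ 4 ∂μ) ^ ((1 : ℝ) / 4) with hB_def
  set E : ℝ := (∫ z, (U z - V z) ^ 4 ∂μ) ^ ((1 : ℝ) / 4) with hE_def
  set Fn : ℝ := (∫ z, (Ψ z ^ 2 + DΨ z ^ 2) ∂μ) ^ ((1 : ℝ) / 2) with hFn_def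
  set d : ℝ := (2 * l * T) ^ ((1 : ℝ) / 4) with hd_def
  have hlT : (0:ℝ) ≤ 2 * l * T := by positivity
  have hA0 : 0 ≤ A := Real.rpow_nonneg hIu4 _
  have hB0 : 0 ≤ B := Real.rpow_nonneg hIv4 _
  have hE0 : 0 ≤ E := Real.rpow_nonneg hIw4 _
  have hFn0 : 0 ≤ Fn := Real.rpow_nonneg hIψ _
  have hd0 : 0 ≤ d := Real.rpow_nonneg hlT _
  -- squares of fourth-root quantities
  have sq_of_quarter : ∀ x : ℝ, 0 ≤ x → (x ^ ((1:ℝ)/4)) ^ 2 = x ^ ((1:ℝ)/2) := by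
    intro x hx
    rw [← Real.rpow_natCast (x ^ ((1:ℝ)/4)) 2, ← Real.rpow_mul hx]
    norm_num
  have hA2 : A ^ 2 = (∫ z, U z ^ 4 ∂μ) ^ ((1:ℝ)/2) := sq_of_quarter _ hIu4
  have hB2 : B ^ 2 = (∫ z, V z ^ 4 ∂μ) ^ ((1:ℝ)/2) := sq_of_quarter _ hIv4
  have hE2 : E ^ 2 = (∫ z, (U z - V z) ^ 4 ∂μ) ^ ((1:ℝ)/2) := sq_of_quarter _ hIw4
  have hd2 : d ^ 2 = (2 * l * T) ^ ((1:ℝ)/2) := sq_of_quarter _ hlT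
  -- pointwise bound for |G|
  have hH : ∀ z, |G z| ≤ |(U z + V z) * (U z - V z)| * |DΨ z| / 2
      + c * (|U z - V z| * |Ψ z|) := by
    intro z
    have hGz : G z = ((U z + V z) * (U z - V z)) * DΨ z / 2 + c * ((U z - V z) * Ψ z) := by
      simp only [hG_def]; ring
    rw [hGz]
    refine (abs_add_le _ _).trans (add_le_add (le_of_eq ?_) (le_of_eq ?_))
    · rw [abs_div, abs_mul, abs_two]
    · rw [abs_mul, abs_mul, abs_of_nonneg hc]
  have hHc : ContinuousOn (fun z => |(U z + V z) * (U z - V z)| * |DΨ z| / 2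
      + c * (|U z - V z| * |Ψ z|)) s :=
    ((hPc.abs.mul hDΨc.abs).div_const 2).add (continuousOn_const.mul (hWc.abs.mul hΨc.abs))
  have habs : |∫ z, G z ∂μ| ≤ ∫ z, |G z| ∂μ := by
    simpa [Real.norm_eq_abs] using MeasureTheory.norm_integral_le_integral_norm (μ := μ) G
  have hmono1 : (∫ z, |G z| ∂μ) ≤ ∫ z, (|(U z + V z) * (U z - V z)| * |DΨ z| / 2
      + c * (|U z - V z| * |Ψ z|)) ∂μ :=
    integral_mono (integ G hGc).abs (integ _ hHc) hH
  have hsplitH : (∫ z, (|(U z + V z) * (U z - V z)| * |DΨ z| / 2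
        + c * (|U z - V z| * |Ψ z|)) ∂μ)
      = (∫ z, |(U z + V z) * (U z - V z)| * |DΨ z| ∂μ) / 2
        + c * ∫ z, |U z - V z| * |Ψ z| ∂μ := by
    rw [integral_add ((integ (fun z => |(U z + V z) * (U z - V z)| * |DΨ z|) (hPc.abs.mul hDΨc.abs)).div_const 2)
      ((integ (fun z => |U z - V z| * |Ψ z|) (hWc.abs.mul hΨc.abs)).const_mul c), MeasureTheory.integral_div, MeasureTheory.integral_const_mul]
  -- Hoelder for the main term
  have hS1 : (∫ z, |(U z + V z) * (U z - V z)| * |DΨ z| ∂μ)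
      ≤ (∫ z, ((U z + V z) * (U z - V z)) ^ 2 ∂μ) ^ ((1:ℝ)/2)
        * (∫ z, DΨ z ^ 2 ∂μ) ^ ((1:ℝ)/2) :=
    KSaux.holder22 (memLp _ hPc _) (memLp _ hDΨc _)
  -- bound ∫ P² via Hoelder again
  have e1 : ∀ x : ℝ, |x ^ 2| = x ^ 2 := fun x => abs_of_nonneg (sq_nonneg x)
  have hUW : (∫ z, U z ^ 2 * (U z - V z) ^ 2 ∂μ)
      ≤ (∫ z, U z ^ 4 ∂μ) ^ ((1:ℝ)/2) * (∫ z, (U z - V z) ^ 4 ∂μ) ^ ((1:ℝ)/2) := by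
    have h := KSaux.holder22 (f := fun z => U z ^ 2) (g := fun z => (U z - V z) ^ 2)
      (memLp _ (hUc.pow 2) _) (memLp _ (hWc.pow 2) _)
    simp only [e1] at h
    calc (∫ z, U z ^ 2 * (U z - V z) ^ 2 ∂μ) ≤ (∫ z, (U z ^ 2) ^ 2 ∂μ) ^ ((1:ℝ)/2)
          * (∫ z, ((U z - V z) ^ 2) ^ 2 ∂μ) ^ ((1:ℝ)/2) := h
      _ = (∫ z, U z ^ 4 ∂μ) ^ ((1:ℝ)/2) * (∫ z, (U z - V z) ^ 4 ∂μ) ^ ((1:ℝ)/2) := by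
          rw [show (fun z => (U z ^ 2) ^ 2) = fun z => U z ^ 4 from funext fun z => by ring,
            show (fun z => ((U z - V z) ^ 2) ^ 2) = fun z => (U z - V z) ^ 4 from
              funext fun z => by ring]
  have hVW : (∫ z, V z ^ 2 * (U z - V z) ^ 2 ∂μ)
      ≤ (∫ z, V z ^ 4 ∂μ) ^ ((1:ℝ)/2) * (∫ z, (U z - V z) ^ 4 ∂μ) ^ ((1:ℝ)/2) := by
    have h := KSaux.holder22 (f := fun z => V z ^ 2) (g := fun z => (U z - V z) ^ 2)
      (memLp _ (hVc.pow 2) _) (memLp _ (hWc.pow 2) _)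
    simp only [e1] at h
    calc (∫ z, V z ^ 2 * (U z - V z) ^ 2 ∂μ) ≤ (∫ z, (V z ^ 2) ^ 2 ∂μ) ^ ((1:ℝ)/2)
          * (∫ z, ((U z - V z) ^ 2) ^ 2 ∂μ) ^ ((1:ℝ)/2) := h
      _ = (∫ z, V z ^ 4 ∂μ) ^ ((1:ℝ)/2) * (∫ z, (U z - V z) ^ 4 ∂μ) ^ ((1:ℝ)/2) := by
          rw [show (fun z => (V z ^ 2) ^ 2) = fun z => V z ^ 4 from funext fun z => by ring,
            show (fun z => ((U z - V z) ^ 2) ^ 2) = fun z => (U z - V z) ^ 4 from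
              funext fun z => by ring]
  have hP2 : (∫ z, ((U z + V z) * (U z - V z)) ^ 2 ∂μ)
      ≤ 2 * (A ^ 2 + B ^ 2) * E ^ 2 := by
    have hpw : ∀ z, ((U z + V z) * (U z - V z)) ^ 2
        ≤ 2 * (U z ^ 2 * (U z - V z) ^ 2) + 2 * (V z ^ 2 * (U z - V z) ^ 2) := by
      intro z
      have key : 2 * (U z ^ 2 * (U z - V z) ^ 2) + 2 * (V z ^ 2 * (U z - V z) ^ 2)
          - ((U z + V z) * (U z - V z)) ^ 2 = ((U z - V z) ^ 2) ^ 2 := by ring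
      linarith [sq_nonneg ((U z - V z) ^ 2)]
    have hint : (∫ z, ((U z + V z) * (U z - V z)) ^ 2 ∂μ)
        ≤ ∫ z, (2 * (U z ^ 2 * (U z - V z) ^ 2) + 2 * (V z ^ 2 * (U z - V z) ^ 2)) ∂μ :=
      integral_mono (integ _ (hPc.pow 2))
        (integ _ (((((hUc.pow 2).mul (hWc.pow 2))).const_smul (2:ℝ)).add
          ((((hVc.pow 2).mul (hWc.pow 2))).const_smul (2:ℝ)))) hpw
    have hsum : (∫ z, (2 * (U z ^ 2 * (U z - V z) ^ 2) + 2 * (V z ^ 2 * (U z - V z) ^ 2)) ∂μ)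
        = 2 * (∫ z, U z ^ 2 * (U z - V z) ^ 2 ∂μ) + 2 * ∫ z, V z ^ 2 * (U z - V z) ^ 2 ∂μ := by
      rw [integral_add ((integ (fun z => U z ^ 2 * (U z - V z) ^ 2) ((hUc.pow 2).mul (hWc.pow 2))).const_mul 2)
        ((integ (fun z => V z ^ 2 * (U z - V z) ^ 2) ((hVc.pow 2).mul (hWc.pow 2))).const_mul 2),
        MeasureTheory.integral_const_mul, MeasureTheory.integral_const_mul]
    rw [hsum] at hint
    rw [hA2, hB2, hE2]
    linarith [hUW, hVW]
  -- bound the DΨ and Ψ L² norms by Fn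
  have hDΨ2 : (∫ z, DΨ z ^ 2 ∂μ) ^ ((1:ℝ)/2) ≤ Fn := by
    rw [hFn_def]
    refine Real.rpow_le_rpow (integral_nonneg fun z => sq_nonneg _) ?_ (by norm_num)
    refine integral_mono (integ _ (hDΨc.pow 2)) (integ _ ((hΨc.pow 2).add (hDΨc.pow 2))) ?_
    intro z
    exact le_add_of_nonneg_left (sq_nonneg _)
  have hΨ2 : (∫ z, Ψ z ^ 2 ∂μ) ^ ((1:ℝ)/2) ≤ Fn := by
    rw [hFn_def]
    refine Real.rpow_le_rpow (integral_nonneg fun z => sq_nonneg _) ?_ (by norm_num)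
    refine integral_mono (integ _ (hΨc.pow 2)) (integ _ ((hΨc.pow 2).add (hDΨc.pow 2))) ?_
    intro z
    exact le_add_of_nonneg_right (sq_nonneg _)
  -- the main-term L² bound
  have hsqrt2 : Real.sqrt 2 ≤ 2 := by
    nlinarith [Real.sq_sqrt (by norm_num : (0:ℝ) ≤ 2), Real.sqrt_nonneg 2]
  have hP2half : (∫ z, ((U z + V z) * (U z - V z)) ^ 2 ∂μ) ^ ((1:ℝ)/2)
      ≤ Real.sqrt 2 * (A + B) * E := by
    have h1 : (∫ z, ((U z + V z) * (U z - V z)) ^ 2 ∂μ) ^ ((1:ℝ)/2)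
        ≤ (2 * (A ^ 2 + B ^ 2) * E ^ 2) ^ ((1:ℝ)/2) :=
      Real.rpow_le_rpow (integral_nonneg fun z => sq_nonneg _) hP2 (by norm_num)
    refine h1.trans ?_
    rw [← Real.sqrt_eq_rpow]
    have h2 : 2 * (A ^ 2 + B ^ 2) * E ^ 2 ≤ (Real.sqrt 2 * (A + B) * E) ^ 2 := by
      have : (Real.sqrt 2 * (A + B) * E) ^ 2 = 2 * (A + B) ^ 2 * E ^ 2 := by
        rw [mul_pow, mul_pow, Real.sq_sqrt (by norm_num : (0:ℝ) ≤ 2)]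
      rw [this]
      have key : 2 * (A + B) ^ 2 * E ^ 2 - 2 * (A ^ 2 + B ^ 2) * E ^ 2
          = 4 * (A * B * E ^ 2) := by ring
      linarith [mul_nonneg (mul_nonneg hA0 hB0) (sq_nonneg E)]
    calc Real.sqrt (2 * (A ^ 2 + B ^ 2) * E ^ 2)
        ≤ Real.sqrt ((Real.sqrt 2 * (A + B) * E) ^ 2) := Real.sqrt_le_sqrt h2
      _ = Real.sqrt 2 * (A + B) * E := Real.sqrt_sq (by positivity)
  -- the c-term: Hoelder and the measure of the box
  have hS2 : (∫ z, |U z - V z| * |Ψ z| ∂μ)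
      ≤ (∫ z, (U z - V z) ^ 2 ∂μ) ^ ((1:ℝ)/2) * (∫ z, Ψ z ^ 2 ∂μ) ^ ((1:ℝ)/2) :=
    KSaux.holder22 (memLp _ hWc _) (memLp _ hΨc _)
  have hone : (∫ z, (1:ℝ) ∂μ) = 2 * l * T := by
    rw [MeasureTheory.integral_const, smul_eq_mul, mul_one, hμ, measureReal_def, Measure.restrict_apply_univ, hsI_def]
    rw [show (Ioc (0:ℝ) T ×ˢ Ioc (-l) l : Set (ℝ × ℝ)) = (Ioc 0 T) ×ˢ (Ioc (-l) l) from rfl]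
    rw [Measure.volume_eq_prod, Measure.prod_prod, Real.volume_Ioc, Real.volume_Ioc,
      ← ENNReal.ofReal_mul (by linarith)]
    rw [ENNReal.toReal_ofReal (by nlinarith)]
    ring
  have hW2 : (∫ z, (U z - V z) ^ 2 ∂μ) ^ ((1:ℝ)/2) ≤ d * E := by
    have h := KSaux.holder22 (f := fun _ : ℝ × ℝ => (1:ℝ)) (g := fun z => (U z - V z) ^ 2)
      (memLp _ continuousOn_const _) (memLp _ (hWc.pow 2) _)
    simp only [abs_one, one_mul, one_pow, e1] at h
    have h4 : (∫ z, ((U z - V z) ^ 2) ^ 2 ∂μ) = ∫ z, (U z - V z) ^ 4 ∂μ := by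
      rw [show (fun z => ((U z - V z) ^ 2) ^ 2) = fun z => (U z - V z) ^ 4 from
        funext fun z => by ring]
    rw [h4, hone] at h
    have hle : (∫ z, (U z - V z) ^ 2 ∂μ) ≤ d ^ 2 * E ^ 2 := by
      rw [hd2, hE2]; exact h
    have h1 : (∫ z, (U z - V z) ^ 2 ∂μ) ^ ((1:ℝ)/2) ≤ (d ^ 2 * E ^ 2) ^ ((1:ℝ)/2) :=
      Real.rpow_le_rpow (integral_nonneg fun z => sq_nonneg _) hle (by norm_num)
    refine h1.trans (le_of_eq ?_)
    rw [← Real.sqrt_eq_rpow, show d ^ 2 * E ^ 2 = (d * E) ^ 2 by ring,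
      Real.sqrt_sq (by positivity)]
  -- assemble everything
  have hS1' : (∫ z, |(U z + V z) * (U z - V z)| * |DΨ z| ∂μ)
      ≤ (Real.sqrt 2 * (A + B) * E) * Fn := by
    refine hS1.trans (mul_le_mul hP2half hDΨ2
      (Real.rpow_nonneg (integral_nonneg fun z => sq_nonneg _) _) (by positivity))
  have hS2' : (∫ z, |U z - V z| * |Ψ z| ∂μ) ≤ (d * E) * Fn := by
    refine hS2.trans (mul_le_mul hW2 hΨ2
      (Real.rpow_nonneg (integral_nonneg fun z => sq_nonneg _) _) (by positivity))
  have hS10 : (0:ℝ) ≤ ∫ z, |(U z + V z) * (U z - V z)| * |DΨ z| ∂μ :=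
    integral_nonneg fun z => mul_nonneg (abs_nonneg _) (abs_nonneg _)
  have hS20 : (0:ℝ) ≤ ∫ z, |U z - V z| * |Ψ z| ∂μ :=
    integral_nonneg fun z => mul_nonneg (abs_nonneg _) (abs_nonneg _)
  calc |∫ z, G z ∂μ|
      ≤ (∫ z, |(U z + V z) * (U z - V z)| * |DΨ z| ∂μ) / 2
        + c * ∫ z, |U z - V z| * |Ψ z| ∂μ := by
        rw [← hsplitH]; exact habs.trans hmono1
    _ ≤ ((Real.sqrt 2 * (A + B) * E) * Fn) / 2 + c * ((d * E) * Fn) := by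
        exact add_le_add (by linarith) (mul_le_mul_of_nonneg_left hS2' hc)
    _ ≤ 1 * (A + B + c * d) * E * Fn := by
        have hx : (0:ℝ) ≤ (A + B) * E * Fn := by positivity
        have h1 : (Real.sqrt 2 * (A + B) * E) * Fn / 2 ≤ (A + B) * E * Fn := by
          calc (Real.sqrt 2 * (A + B) * E) * Fn / 2
              = Real.sqrt 2 * ((A + B) * E * Fn) / 2 := by ring
            _ ≤ 2 * ((A + B) * E * Fn) / 2 := by
                have := mul_le_mul_of_nonneg_right hsqrt2 hx
                linarith
            _ = (A + B) * E * Fn := by ring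
        have h3 : c * ((d * E) * Fn) = c * d * E * Fn := by ring
        have h4 : 1 * (A + B + c * d) * E * Fn = (A + B) * E * Fn + c * d * E * Fn := by ring
        linarith
end

section
/- There exists a universal constant M > 0 such that the following holds. Let l > 0, c ≥ 0, and let u, v, ψ : [−l, l] → ℝ be continuously differentiable with ψ(−l) = ψ(l) = 0. Then | ∫_I ( −u u' + v v' + c (u − v) ) ψ dx | ≤ M ( ‖u‖_{L⁴(I)} + ‖v‖_{L⁴(I)} + c (2 l)^{1/4} ) ‖u − v‖_{L⁴(I)} ‖ψ‖_{H¹(I)}. -/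
open Set intervalIntegral
open MeasureTheory
open scoped ENNReal NNReal

private lemma memLp_aux' {l : ℝ} {f : ℝ → ℝ} (hf : ContinuousOn f (Icc (-l) l)) (p : ℝ≥0∞) :
    MemLp f p (volume.restrict (Icc (-l) l)) := by
  haveI : IsFiniteMeasure (volume.restrict (Icc (-l) l)) :=
    ⟨by rw [Measure.restrict_apply_univ]; exact measure_Icc_lt_top⟩
  obtain ⟨C, hC⟩ := isCompact_Icc.exists_bound_of_continuousOn hf
  exact MemLp.of_bound (hf.aestronglyMeasurable measurableSet_Icc) C
    ((ae_restrict_iff' measurableSet_Icc).2 (ae_of_all _ hC))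

private lemma cs_aux' {l : ℝ} {f g : ℝ → ℝ} (hf : ContinuousOn f (Icc (-l) l))
    (hg : ContinuousOn g (Icc (-l) l)) :
    ∫ x in Icc (-l) l, |f x * g x| ≤
      (∫ x in Icc (-l) l, f x ^ 2) ^ ((1:ℝ)/2) * (∫ x in Icc (-l) l, g x ^ 2) ^ ((1:ℝ)/2) := by
  have hpq : Real.HolderConjugate 2 2 := Real.HolderConjugate.two_two
  have h := MeasureTheory.integral_mul_norm_le_Lp_mul_Lq (μ := volume.restrict (Icc (-l) l))
    hpq (memLp_aux' hf _) (memLp_aux' hg _)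
  have e1 : ∀ (h : ℝ → ℝ), (fun x => ‖h x‖ ^ (2:ℝ)) = fun x => h x ^ 2 := by
    intro h; funext x
    rw [show (2:ℝ) = ((2:ℕ):ℝ) by norm_num, Real.rpow_natCast, Real.norm_eq_abs, sq_abs]
  calc ∫ x in Icc (-l) l, |f x * g x|
      = ∫ x in Icc (-l) l, ‖f x‖ * ‖g x‖ := by
        congr 1; funext x; rw [abs_mul]; rfl
    _ ≤ (∫ x in Icc (-l) l, ‖f x‖ ^ (2:ℝ)) ^ (1/(2:ℝ)) *
        (∫ x in Icc (-l) l, ‖g x‖ ^ (2:ℝ)) ^ (1/(2:ℝ)) := h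
    _ = (∫ x in Icc (-l) l, f x ^ 2) ^ ((1:ℝ)/2) * (∫ x in Icc (-l) l, g x ^ 2) ^ ((1:ℝ)/2) := by
        rw [e1 f, e1 g]

private lemma sqrt_sq0' {a : ℝ} (ha : 0 ≤ a) : (a ^ 2) ^ ((1:ℝ)/2) = a := by
  rw [← Real.rpow_natCast a 2, ← Real.rpow_mul ha]
  norm_num

private lemma quarter_pow' {X : ℝ} (hX : 0 ≤ X) : (X ^ ((1:ℝ)/4)) ^ (4:ℕ) = X := by
  rw [← Real.rpow_natCast _ 4, ← Real.rpow_mul hX]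
  norm_num

set_option maxHeartbeats 1000000 in
/-- Pointwise-in-time Lipschitz estimate, in the dual norm of `H¹₀(I)`, for the
Kuramoto–Sivashinsky nonlinearity `G₀(u) = −u uₓ + c u`: there is a universal
constant `M > 0` such that for all `l > 0`, `c ≥ 0`, and `C¹` functions
`u, v, ψ` on `[-l, l]` with `ψ(±l) = 0`,
`|∫_I (−u u' + v v' + c(u − v)) ψ| ≤
  M (‖u‖_{L⁴} + ‖v‖_{L⁴} + c (2l)^{1/4}) ‖u − v‖_{L⁴} ‖ψ‖_{H¹}`. -/
theorem stmt_6 :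
    ∃ M : ℝ, 0 < M ∧ ∀ (l c : ℝ), 0 < l → 0 ≤ c →
      ∀ (u u' v v' ψ ψ' : ℝ → ℝ),
      (∀ x ∈ Icc (-l) l, HasDerivAt u (u' x) x) →
      ContinuousOn u' (Icc (-l) l) →
      (∀ x ∈ Icc (-l) l, HasDerivAt v (v' x) x) →
      ContinuousOn v' (Icc (-l) l) →
      (∀ x ∈ Icc (-l) l, HasDerivAt ψ (ψ' x) x) →
      ContinuousOn ψ' (Icc (-l) l) →
      ψ (-l) = 0 → ψ l = 0 →
      |∫ x in (-l)..l,
          (-(u x * u' x) + v x * v' x + c * (u x - v x)) * ψ x| ≤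
        M * ((∫ x in (-l)..l, u x ^ 4) ^ ((1 : ℝ) / 4) +
              (∫ x in (-l)..l, v x ^ 4) ^ ((1 : ℝ) / 4) +
              c * (2 * l) ^ ((1 : ℝ) / 4)) *
          (∫ x in (-l)..l, (u x - v x) ^ 4) ^ ((1 : ℝ) / 4) *
          (∫ x in (-l)..l, (ψ x ^ 2 + ψ' x ^ 2)) ^ ((1 : ℝ) / 2) := by
  refine ⟨2, by norm_num, ?_⟩
  intro l c hl hc u u' v v' ψ ψ' hu hcu' hv hcv' hψ hcψ' hψa hψb
  have hll : -l ≤ l := by linarith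
  have hIcc : uIcc (-l) l = Icc (-l) l := uIcc_of_le hll
  have hcu : ContinuousOn u (Icc (-l) l) := fun x hx => (hu x hx).continuousAt.continuousWithinAt
  have hcv : ContinuousOn v (Icc (-l) l) := fun x hx => (hv x hx).continuousAt.continuousWithinAt
  have hcψ : ContinuousOn ψ (Icc (-l) l) := fun x hx => (hψ x hx).continuousAt.continuousWithinAt
  -- Step 1: integration by parts
  have hc1 : ContinuousOn (fun x => (v x * v' x - u x * u' x) * ψ x) (Icc (-l) l) :=
    ((hcv.mul hcv').sub (hcu.mul hcu')).mul hcψ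
  have hc2 : ContinuousOn (fun x => (v x ^ 2 - u x ^ 2)/2 * ψ' x) (Icc (-l) l) :=
    (((hcv.pow 2).sub (hcu.pow 2)).div_const 2).mul hcψ'
  have hc3 : ContinuousOn (fun x => (u x - v x) * ψ x) (Icc (-l) l) :=
    (hcu.sub hcv).mul hcψ
  have hint1 : IntervalIntegrable (fun x => (v x * v' x - u x * u' x) * ψ x) volume (-l) l :=
    (hIcc ▸ hc1 : ContinuousOn _ (uIcc (-l) l)).intervalIntegrable
  have hint2 : IntervalIntegrable (fun x => (v x ^ 2 - u x ^ 2)/2 * ψ' x) volume (-l) l :=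
    (hIcc ▸ hc2 : ContinuousOn _ (uIcc (-l) l)).intervalIntegrable
  have hint3 : IntervalIntegrable (fun x => (u x - v x) * ψ x) volume (-l) l :=
    (hIcc ▸ hc3 : ContinuousOn _ (uIcc (-l) l)).intervalIntegrable
  have hF : ∀ x ∈ uIcc (-l) l, HasDerivAt (fun y => (v y ^ 2 - u y ^ 2)/2 * ψ y)
      ((v x * v' x - u x * u' x) * ψ x + (v x ^ 2 - u x ^ 2)/2 * ψ' x) x := by
    intro x hx
    rw [hIcc] at hx
    have h1 := ((((hv x hx).fun_pow 2).fun_sub ((hu x hx).fun_pow 2)).div_const 2).fun_mul (hψ x hx)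
    refine h1.congr_deriv ?_
    ring
  have hIBP : (∫ x in (-l)..l, ((v x * v' x - u x * u' x) * ψ x
      + (v x ^ 2 - u x ^ 2)/2 * ψ' x)) = 0 := by
    rw [intervalIntegral.integral_eq_sub_of_hasDerivAt hF (hint1.add hint2)]
    simp [hψa, hψb]
  have h0 : (∫ x in (-l)..l, (v x * v' x - u x * u' x) * ψ x)
      + (∫ x in (-l)..l, (v x ^ 2 - u x ^ 2)/2 * ψ' x) = 0 := by
    rw [← intervalIntegral.integral_add hint1 hint2]; exact hIBP
  have hA : (∫ x in (-l)..l, (v x * v' x - u x * u' x) * ψ x)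
      = ∫ x in (-l)..l, (u x ^ 2 - v x ^ 2)/2 * ψ' x := by
    have h2 : (∫ x in (-l)..l, (u x ^ 2 - v x ^ 2)/2 * ψ' x)
        = - ∫ x in (-l)..l, (v x ^ 2 - u x ^ 2)/2 * ψ' x := by
      rw [← intervalIntegral.integral_neg]; congr 1; funext x; ring
    rw [h2]; linarith
  have hmain : (∫ x in (-l)..l, (-(u x * u' x) + v x * v' x + c * (u x - v x)) * ψ x)
      = (∫ x in (-l)..l, (u x ^ 2 - v x ^ 2)/2 * ψ' x)
        + c * ∫ x in (-l)..l, (u x - v x) * ψ x := by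
    rw [← hA, ← intervalIntegral.integral_const_mul,
      ← intervalIntegral.integral_add hint1 (hint3.const_mul c)]
    congr 1; funext x; ring
  -- Step 2: convert to set integrals on Icc
  have hconv : ∀ f : ℝ → ℝ, (∫ x in (-l)..l, f x) = ∫ x in Icc (-l) l, f x := fun f => by
    rw [intervalIntegral.integral_of_le hll, MeasureTheory.integral_Icc_eq_integral_Ioc]
  rw [hmain]
  simp only [hconv]
  set P := (∫ x in Icc (-l) l, u x ^ 4) ^ ((1:ℝ)/4) with hPdef
  set Q := (∫ x in Icc (-l) l, v x ^ 4) ^ ((1:ℝ)/4) with hQdef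
  set R := (∫ x in Icc (-l) l, (u x - v x) ^ 4) ^ ((1:ℝ)/4) with hRdef
  set S := (∫ x in Icc (-l) l, (ψ x ^ 2 + ψ' x ^ 2)) ^ ((1:ℝ)/2) with hSdef
  -- nonnegativity and power identities
  have hu4 : 0 ≤ ∫ x in Icc (-l) l, u x ^ 4 :=
    setIntegral_nonneg measurableSet_Icc fun x _ => by positivity
  have hv4 : 0 ≤ ∫ x in Icc (-l) l, v x ^ 4 :=
    setIntegral_nonneg measurableSet_Icc fun x _ => by positivity
  have hw4 : 0 ≤ ∫ x in Icc (-l) l, (u x - v x) ^ 4 :=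
    setIntegral_nonneg measurableSet_Icc fun x _ => by positivity
  have hPnn : 0 ≤ P := Real.rpow_nonneg hu4 _
  have hQnn : 0 ≤ Q := Real.rpow_nonneg hv4 _
  have hRnn : 0 ≤ R := Real.rpow_nonneg hw4 _
  have hSnn : 0 ≤ S := Real.rpow_nonneg
    (setIntegral_nonneg measurableSet_Icc fun x _ => by positivity) _
  have hP4 : P ^ 4 = ∫ x in Icc (-l) l, u x ^ 4 := quarter_pow' hu4
  have hQ4 : Q ^ 4 = ∫ x in Icc (-l) l, v x ^ 4 := quarter_pow' hv4
  have hR4 : R ^ 4 = ∫ x in Icc (-l) l, (u x - v x) ^ 4 := quarter_pow' hw4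
  have h2l : (0:ℝ) ≤ 2 * l := by linarith
  have h2l4 : (0:ℝ) ≤ (2*l) ^ ((1:ℝ)/4) := Real.rpow_nonneg h2l _
  have h2lsq : ((2*l) ^ ((1:ℝ)/4)) ^ (2:ℕ) = (2*l) ^ ((1:ℝ)/2) := by
    rw [← Real.rpow_natCast _ 2, ← Real.rpow_mul h2l]
    norm_num
  -- S dominates the L² norms of ψ and ψ'
  have isum : IntegrableOn (fun x => ψ x ^ 2 + ψ' x ^ 2) (Icc (-l) l) :=
    ContinuousOn.integrableOn_compact isCompact_Icc ((hcψ.pow 2).add (hcψ'.pow 2))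
  have hS1 : (∫ x in Icc (-l) l, ψ x ^ 2) ^ ((1:ℝ)/2) ≤ S := by
    refine Real.rpow_le_rpow (setIntegral_nonneg measurableSet_Icc fun x _ => by positivity)
      (setIntegral_mono_on (ContinuousOn.integrableOn_compact isCompact_Icc (hcψ.pow 2))
        isum measurableSet_Icc fun x _ => by nlinarith [sq_nonneg (ψ' x)]) (by norm_num)
  have hS2 : (∫ x in Icc (-l) l, ψ' x ^ 2) ^ ((1:ℝ)/2) ≤ S := by
    refine Real.rpow_le_rpow (setIntegral_nonneg measurableSet_Icc fun x _ => by positivity)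
      (setIntegral_mono_on (ContinuousOn.integrableOn_compact isCompact_Icc (hcψ'.pow 2))
        isum measurableSet_Icc fun x _ => by nlinarith [sq_nonneg (ψ x)]) (by norm_num)
  -- key estimate 1
  have key1 : |∫ x in Icc (-l) l, (u x ^ 2 - v x ^ 2)/2 * ψ' x| ≤ (P + Q) * R * S := by
    have habs : |∫ x in Icc (-l) l, (u x ^ 2 - v x ^ 2)/2 * ψ' x|
        ≤ ∫ x in Icc (-l) l, |(u x ^ 2 - v x ^ 2)/2 * ψ' x| := by
      exact MeasureTheory.norm_integral_le_integral_norm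
        (μ := volume.restrict (Icc (-l) l)) (fun x => (u x ^ 2 - v x ^ 2)/2 * ψ' x)
    have hcs : ∫ x in Icc (-l) l, |(u x ^ 2 - v x ^ 2)/2 * ψ' x| ≤
        (∫ x in Icc (-l) l, ((u x ^ 2 - v x ^ 2)/2) ^ 2) ^ ((1:ℝ)/2) *
        (∫ x in Icc (-l) l, ψ' x ^ 2) ^ ((1:ℝ)/2) :=
      cs_aux' (((hcu.pow 2).sub (hcv.pow 2)).div_const 2) hcψ'
    -- bound the first factor
    have hXbound : (∫ x in Icc (-l) l, ((u x ^ 2 - v x ^ 2)/2) ^ 2) ≤ ((P + Q) * R) ^ 2 := by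
      have e2 : (∫ x in Icc (-l) l, ((u x ^ 2 - v x ^ 2)/2) ^ 2)
          = ∫ x in Icc (-l) l, |(u x - v x) ^ 2 * ((u x + v x) ^ 2 / 4)| := by
        congr 1; funext x
        rw [abs_of_nonneg (by positivity)]; ring
      have hcs2 : ∫ x in Icc (-l) l, |(u x - v x) ^ 2 * ((u x + v x) ^ 2 / 4)| ≤
          (∫ x in Icc (-l) l, ((u x - v x) ^ 2) ^ 2) ^ ((1:ℝ)/2) *
          (∫ x in Icc (-l) l, ((u x + v x) ^ 2 / 4) ^ 2) ^ ((1:ℝ)/2) :=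
        cs_aux' ((hcu.sub hcv).pow 2) (((hcu.add hcv).pow 2).div_const 4)
      have e3 : (∫ x in Icc (-l) l, ((u x - v x) ^ 2) ^ 2)
          = ∫ x in Icc (-l) l, (u x - v x) ^ 4 := by
        congr 1; funext x; ring
      have e4 : (∫ x in Icc (-l) l, ((u x + v x) ^ 2 / 4) ^ 2) ≤ (P + Q) ^ 4 := by
        have hmono : (∫ x in Icc (-l) l, ((u x + v x) ^ 2 / 4) ^ 2)
            ≤ ∫ x in Icc (-l) l, (u x ^ 4 + v x ^ 4) / 2 := by
          refine setIntegral_mono_on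
            (ContinuousOn.integrableOn_compact isCompact_Icc
              ((((hcu.add hcv).pow 2).div_const 4).pow 2))
            (ContinuousOn.integrableOn_compact isCompact_Icc
              (((hcu.pow 4).add (hcv.pow 4)).div_const 2))
            measurableSet_Icc fun x _ => by
              have h1 : (u x + v x) ^ 2 ≤ 2 * (u x ^ 2 + v x ^ 2) := by
                nlinarith [sq_nonneg (u x - v x)]
              nlinarith [h1, sq_nonneg (u x ^ 2 - v x ^ 2), sq_nonneg (u x + v x),
                sq_nonneg (u x ^ 2 + v x ^ 2)]
        have hval : (∫ x in Icc (-l) l, (u x ^ 4 + v x ^ 4) / 2) = (P ^ 4 + Q ^ 4) / 2 := by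
          rw [hP4, hQ4]
          rw [MeasureTheory.integral_div, MeasureTheory.integral_add
            (ContinuousOn.integrableOn_compact isCompact_Icc (hcu.fun_pow 4))
            (ContinuousOn.integrableOn_compact isCompact_Icc (hcv.fun_pow 4))]
        have hPQ4 : (P ^ 4 + Q ^ 4) / 2 ≤ (P + Q) ^ 4 := by
          nlinarith [mul_nonneg hPnn hQnn, sq_nonneg (P - Q), sq_nonneg (P + Q), mul_nonneg (mul_nonneg hPnn hPnn) hQnn, mul_nonneg (mul_nonneg hQnn hQnn) hPnn]
        linarith [hmono, hval.le, hval.ge]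
      -- assemble
      have h14 : (∫ x in Icc (-l) l, ((u x - v x) ^ 2) ^ 2) ^ ((1:ℝ)/2) = R ^ 2 := by
        have e3b : R ^ 4 = (R ^ 2) ^ 2 := by ring
        rw [e3, ← hR4, e3b, sqrt_sq0' (sq_nonneg R)]
      have h24 : (∫ x in Icc (-l) l, ((u x + v x) ^ 2 / 4) ^ 2) ^ ((1:ℝ)/2) ≤ (P + Q) ^ 2 := by
        calc (∫ x in Icc (-l) l, ((u x + v x) ^ 2 / 4) ^ 2) ^ ((1:ℝ)/2)
            ≤ ((P + Q) ^ 4) ^ ((1:ℝ)/2) := Real.rpow_le_rpow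
              (setIntegral_nonneg measurableSet_Icc fun x _ => by positivity) e4 (by norm_num)
          _ = (P + Q) ^ 2 := by
              have e5 : (P + Q) ^ 4 = ((P + Q) ^ 2) ^ 2 := by ring
              rw [e5, sqrt_sq0' (sq_nonneg (P + Q))]
      calc (∫ x in Icc (-l) l, ((u x ^ 2 - v x ^ 2)/2) ^ 2)
          ≤ (∫ x in Icc (-l) l, ((u x - v x) ^ 2) ^ 2) ^ ((1:ℝ)/2) *
            (∫ x in Icc (-l) l, ((u x + v x) ^ 2 / 4) ^ 2) ^ ((1:ℝ)/2) := by
            rw [e2]; exact hcs2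
        _ ≤ R ^ 2 * (P + Q) ^ 2 := by
            rw [h14]
            exact mul_le_mul_of_nonneg_left h24 (by positivity)
        _ = ((P + Q) * R) ^ 2 := by ring
    have hX12 : (∫ x in Icc (-l) l, ((u x ^ 2 - v x ^ 2)/2) ^ 2) ^ ((1:ℝ)/2) ≤ (P + Q) * R := by
      calc (∫ x in Icc (-l) l, ((u x ^ 2 - v x ^ 2)/2) ^ 2) ^ ((1:ℝ)/2)
          ≤ (((P + Q) * R) ^ 2) ^ ((1:ℝ)/2) := Real.rpow_le_rpow
            (setIntegral_nonneg measurableSet_Icc fun x _ => by positivity) hXbound (by norm_num)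
        _ = (P + Q) * R := sqrt_sq0' (mul_nonneg (add_nonneg hPnn hQnn) hRnn)
    calc |∫ x in Icc (-l) l, (u x ^ 2 - v x ^ 2)/2 * ψ' x|
        ≤ ∫ x in Icc (-l) l, |(u x ^ 2 - v x ^ 2)/2 * ψ' x| := habs
      _ ≤ (∫ x in Icc (-l) l, ((u x ^ 2 - v x ^ 2)/2) ^ 2) ^ ((1:ℝ)/2) *
          (∫ x in Icc (-l) l, ψ' x ^ 2) ^ ((1:ℝ)/2) := hcs
      _ ≤ ((P + Q) * R) * S := by
          refine mul_le_mul hX12 hS2 (Real.rpow_nonneg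
            (setIntegral_nonneg measurableSet_Icc fun x _ => by positivity) _)
            (mul_nonneg (add_nonneg hPnn hQnn) hRnn)
      _ = (P + Q) * R * S := by ring
  -- key estimate 2
  have key2 : |∫ x in Icc (-l) l, (u x - v x) * ψ x| ≤ (2*l) ^ ((1:ℝ)/4) * R * S := by
    have habs : |∫ x in Icc (-l) l, (u x - v x) * ψ x|
        ≤ ∫ x in Icc (-l) l, |(u x - v x) * ψ x| := by
      simpa [Real.norm_eq_abs, abs_mul] using MeasureTheory.norm_integral_le_integral_norm
        (μ := volume.restrict (Icc (-l) l)) (fun x => (u x - v x) * ψ x)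
    have hcs : ∫ x in Icc (-l) l, |(u x - v x) * ψ x| ≤
        (∫ x in Icc (-l) l, (u x - v x) ^ 2) ^ ((1:ℝ)/2) *
        (∫ x in Icc (-l) l, ψ x ^ 2) ^ ((1:ℝ)/2) := cs_aux' (hcu.sub hcv) hcψ
    -- (∫ (u-v)²)^{1/2} ≤ R (2l)^{1/4}
    have hone : (∫ x in Icc (-l) l, ((1:ℝ)) ^ 2) = 2 * l := by
      simp only [one_pow]
      rw [setIntegral_const, Real.volume_real_Icc, smul_eq_mul, mul_one,
        max_eq_left (by linarith)]
      ring
    have hW : (∫ x in Icc (-l) l, (u x - v x) ^ 2) ≤ (R * (2*l) ^ ((1:ℝ)/4)) ^ 2 := by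
      have e2 : (∫ x in Icc (-l) l, (u x - v x) ^ 2)
          = ∫ x in Icc (-l) l, |(u x - v x) ^ 2 * (1:ℝ)| := by
        congr 1; funext x; rw [abs_of_nonneg (by positivity)]; ring
      have hcs2 : ∫ x in Icc (-l) l, |(u x - v x) ^ 2 * (1:ℝ)| ≤
          (∫ x in Icc (-l) l, ((u x - v x) ^ 2) ^ 2) ^ ((1:ℝ)/2) *
          (∫ x in Icc (-l) l, ((1:ℝ)) ^ 2) ^ ((1:ℝ)/2) :=
        cs_aux' ((hcu.sub hcv).pow 2) continuousOn_const
      have e3 : (∫ x in Icc (-l) l, ((u x - v x) ^ 2) ^ 2) ^ ((1:ℝ)/2) = R ^ 2 := by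
        have e3a : (∫ x in Icc (-l) l, ((u x - v x) ^ 2) ^ 2)
            = ∫ x in Icc (-l) l, (u x - v x) ^ 4 := by congr 1; funext x; ring
        have e3b : R ^ 4 = (R ^ 2) ^ 2 := by ring
        rw [e3a, ← hR4, e3b, sqrt_sq0' (sq_nonneg R)]
      calc (∫ x in Icc (-l) l, (u x - v x) ^ 2)
          ≤ (∫ x in Icc (-l) l, ((u x - v x) ^ 2) ^ 2) ^ ((1:ℝ)/2) *
            (∫ x in Icc (-l) l, ((1:ℝ)) ^ 2) ^ ((1:ℝ)/2) := by rw [e2]; exact hcs2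
        _ = R ^ 2 * (2*l) ^ ((1:ℝ)/2) := by rw [e3, hone]
        _ = (R * (2*l) ^ ((1:ℝ)/4)) ^ 2 := by rw [mul_pow, h2lsq]
    have hW2 : (∫ x in Icc (-l) l, (u x - v x) ^ 2) ^ ((1:ℝ)/2) ≤ R * (2*l) ^ ((1:ℝ)/4) := by
      calc (∫ x in Icc (-l) l, (u x - v x) ^ 2) ^ ((1:ℝ)/2)
          ≤ ((R * (2*l) ^ ((1:ℝ)/4)) ^ 2) ^ ((1:ℝ)/2) := Real.rpow_le_rpow
            (setIntegral_nonneg measurableSet_Icc fun x _ => by positivity) hW (by norm_num)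
        _ = R * (2*l) ^ ((1:ℝ)/4) := sqrt_sq0' (mul_nonneg hRnn h2l4)
    calc |∫ x in Icc (-l) l, (u x - v x) * ψ x|
        ≤ ∫ x in Icc (-l) l, |(u x - v x) * ψ x| := habs
      _ ≤ (∫ x in Icc (-l) l, (u x - v x) ^ 2) ^ ((1:ℝ)/2) *
          (∫ x in Icc (-l) l, ψ x ^ 2) ^ ((1:ℝ)/2) := hcs
      _ ≤ (R * (2*l) ^ ((1:ℝ)/4)) * S := by
          refine mul_le_mul hW2 hS1 (Real.rpow_nonneg
            (setIntegral_nonneg measurableSet_Icc fun x _ => by positivity) _)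
            (mul_nonneg hRnn h2l4)
      _ = (2*l) ^ ((1:ℝ)/4) * R * S := by ring
  -- final assembly
  have htri : |(∫ x in Icc (-l) l, (u x ^ 2 - v x ^ 2)/2 * ψ' x)
      + c * ∫ x in Icc (-l) l, (u x - v x) * ψ x|
      ≤ (P + Q) * R * S + c * ((2*l) ^ ((1:ℝ)/4) * R * S) := by
    refine (abs_add_le _ _).trans ?_
    have : |c * ∫ x in Icc (-l) l, (u x - v x) * ψ x|
        = c * |∫ x in Icc (-l) l, (u x - v x) * ψ x| := by
      rw [abs_mul, abs_of_nonneg hc]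
    rw [this]
    exact add_le_add key1 (mul_le_mul_of_nonneg_left key2 hc)
  refine htri.trans ?_
  have hRS : 0 ≤ R * S := mul_nonneg hRnn hSnn
  nlinarith [mul_nonneg (mul_nonneg (add_nonneg hPnn hQnn) hRnn) hSnn,
    mul_nonneg (mul_nonneg (mul_nonneg hc h2l4) hRnn) hSnn]
end

section
/- Let y : [−l, l] → ℝ be continuously differentiable with y(−l) = y(l) = 0 and let w : [−l, l] → ℝ be continuously differentiable. Then | ∫_I y w w' dx | ≤ (1/2) ∫_I ( y² + (y')² ) dx + (1/8) ∫_I w⁴ dx. -/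
open Set intervalIntegral

/-- For `y` a `C¹` function on `[-l, l]` vanishing at the endpoints and `w`
a `C¹` function on `[-l, l]`,
`|∫_I y w w' dx| ≤ (1/2) ∫_I (y² + (y')²) dx + (1/8) ∫_I w⁴ dx`. -/
theorem stmt_8 (l : ℝ) (hl : 0 < l)
    (y y' w w' : ℝ → ℝ)
    (hy : ∀ x ∈ Icc (-l) l, HasDerivAt y (y' x) x)
    (hy' : ContinuousOn y' (Icc (-l) l))
    (hw : ∀ x ∈ Icc (-l) l, HasDerivAt w (w' x) x)
    (hw' : ContinuousOn w' (Icc (-l) l))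
    (hyl : y (-l) = 0) (hyr : y l = 0) :
    |∫ x in (-l)..l, y x * w x * w' x| ≤
      (1 / 2) * (∫ x in (-l)..l, (y x ^ 2 + y' x ^ 2)) +
        (1 / 8) * ∫ x in (-l)..l, w x ^ 4 := by
  have hle : (-l) ≤ l := by linarith
  have huIcc : uIcc (-l) l = Icc (-l) l := uIcc_of_le hle
  have hyc : ContinuousOn y (Icc (-l) l) :=
    fun x hx => (hy x hx).continuousAt.continuousWithinAt
  have hwc : ContinuousOn w (Icc (-l) l) :=
    fun x hx => (hw x hx).continuousAt.continuousWithinAt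
  -- integrabilities
  have int1 : IntervalIntegrable (fun x => y x * w x * w' x) MeasureTheory.volume (-l) l := by
    apply ContinuousOn.intervalIntegrable; rw [huIcc]
    exact (hyc.mul hwc).mul hw'
  have int2 : IntervalIntegrable (fun x => y' x * w x ^ 2 / 2) MeasureTheory.volume (-l) l := by
    apply ContinuousOn.intervalIntegrable; rw [huIcc]
    exact (hy'.mul (hwc.pow 2)).div_const 2
  have int3 : IntervalIntegrable (fun x => y x ^ 2 + y' x ^ 2) MeasureTheory.volume (-l) l := by
    apply ContinuousOn.intervalIntegrable; rw [huIcc]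
    exact (hyc.pow 2).add (hy'.pow 2)
  have int4 : IntervalIntegrable (fun x => w x ^ 4) MeasureTheory.volume (-l) l := by
    apply ContinuousOn.intervalIntegrable; rw [huIcc]
    exact hwc.pow 4
  -- integration by parts
  have key : ∫ x in (-l)..l, (y' x * w x ^ 2 / 2 + y x * w x * w' x) =
      y l * w l ^ 2 / 2 - y (-l) * w (-l) ^ 2 / 2 := by
    apply integral_eq_sub_of_hasDerivAt
    · intro x hx
      rw [huIcc] at hx
      have h := ((hy x hx).mul ((hw x hx).pow 2)).div_const 2
      refine HasDerivAt.congr_deriv h ?_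
      norm_num only [Pi.pow_apply]
      ring
    · exact int2.add int1
  rw [hyl, hyr] at key
  have hsplit : (∫ x in (-l)..l, y' x * w x ^ 2 / 2) +
      (∫ x in (-l)..l, y x * w x * w' x) = 0 := by
    rw [← integral_add int2 int1]
    simpa using key
  have heq : ∫ x in (-l)..l, y x * w x * w' x = -∫ x in (-l)..l, y' x * w x ^ 2 / 2 := by
    linarith
  rw [heq, abs_neg]
  -- bound
  have habs : |∫ x in (-l)..l, y' x * w x ^ 2 / 2| ≤
      ∫ x in (-l)..l, |y' x * w x ^ 2 / 2| := by
    apply intervalIntegral.abs_integral_le_integral_abs hle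
  have hmono : (∫ x in (-l)..l, |y' x * w x ^ 2 / 2|) ≤
      ∫ x in (-l)..l, ((1/2) * (y x ^ 2 + y' x ^ 2) + (1/8) * w x ^ 4) := by
    apply integral_mono_on hle _ ((int3.const_mul _).add (int4.const_mul _))
    · intro x hx
      rw [abs_le]
      constructor
      · nlinarith [sq_nonneg (y' x + w x ^ 2 / 2), sq_nonneg (y x)]
      · nlinarith [sq_nonneg (y' x - w x ^ 2 / 2), sq_nonneg (y x)]
    · exact int2.abs
  calc |∫ x in (-l)..l, y' x * w x ^ 2 / 2| ≤
      ∫ x in (-l)..l, ((1/2) * (y x ^ 2 + y' x ^ 2) + (1/8) * w x ^ 4) :=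
        le_trans habs hmono
    _ = (1 / 2) * (∫ x in (-l)..l, (y x ^ 2 + y' x ^ 2)) +
        (1 / 8) * ∫ x in (-l)..l, w x ^ 4 := by
        rw [integral_add (int3.const_mul _) (int4.const_mul _),
          integral_const_mul, integral_const_mul]
end

section
/- Let C > 0 and let y : [−l, l] → ℝ be continuously differentiable with y(−l) = y(l) = 0, satisfying the interpolation bound ‖y‖_{L⁴(I)} ≤ C ‖y‖_{L²(I)}^{1/2} ‖y‖_{V}^{1/2}, and let w : [−l, l] → ℝ be continuous. Then | ∫_I y y' w dx | ≤ (3C/4) ‖y‖_{V}² + (C/4) ‖y‖_{L²(I)}² ‖w‖_{L⁴(I)}⁴. -/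
open Set intervalIntegral MeasureTheory

/-- Given the interpolation bound `‖y‖_{L⁴} ≤ C ‖y‖_{L²}^{1/2} ‖y‖_V^{1/2}`
for a `C¹` function `y` on `[-l, l]` vanishing at the endpoints, and a
continuous `w` on `[-l, l]`,
`|∫_I y y' w dx| ≤ (3C/4) ‖y‖_V² + (C/4) ‖y‖_{L²}² ‖w‖_{L⁴}⁴`. -/
theorem stmt_9 (l : ℝ) (hl : 0 < l) (C : ℝ) (hC : 0 < C)
    (y y' w : ℝ → ℝ)
    (hy : ∀ x ∈ Icc (-l) l, HasDerivAt y (y' x) x)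
    (hy' : ContinuousOn y' (Icc (-l) l))
    (hyl : y (-l) = 0) (hyr : y l = 0)
    (hinterp : (∫ x in (-l)..l, y x ^ 4) ^ ((1 : ℝ) / 4) ≤
      C * (∫ x in (-l)..l, y x ^ 2) ^ ((1 : ℝ) / 4) *
        (∫ x in (-l)..l, (y x ^ 2 + y' x ^ 2)) ^ ((1 : ℝ) / 4))
    (hw : ContinuousOn w (Icc (-l) l)) :
    |∫ x in (-l)..l, y x * y' x * w x| ≤
      (3 * C / 4) * (∫ x in (-l)..l, (y x ^ 2 + y' x ^ 2)) +
        (C / 4) * (∫ x in (-l)..l, y x ^ 2) * ∫ x in (-l)..l, w x ^ 4 := by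
  have hll : (-l : ℝ) ≤ l := by linarith
  set μ := MeasureTheory.volume.restrict (Ioc (-l) l) with hμ
  haveI : IsFiniteMeasure μ := ⟨by
    rw [hμ, Measure.restrict_apply_univ]; exact measure_Ioc_lt_top⟩
  have hycont : ContinuousOn y (Icc (-l) l) := fun x hx =>
    (hy x hx).continuousAt.continuousWithinAt
  have memLp : ∀ f : ℝ → ℝ, ContinuousOn f (Icc (-l) l) → ∀ p : ENNReal, MemLp f p μ := by
    intro f hf p
    obtain ⟨M, hM⟩ := isCompact_Icc.exists_bound_of_continuousOn hf
    refine MemLp.of_bound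
      ((hf.mono Ioc_subset_Icc_self).aestronglyMeasurable measurableSet_Ioc) M ?_
    rw [hμ, ae_restrict_iff' measurableSet_Ioc]
    exact MeasureTheory.ae_of_all _ fun x hx => hM x (Ioc_subset_Icc_self hx)
  have conj : Real.HolderConjugate 2 2 := Real.holderConjugate_iff.2 ⟨one_lt_two, by norm_num⟩
  have habs2 : ∀ a : ℝ, |a| ^ (2:ℝ) = a ^ 2 := fun a => by
    rw [show (2:ℝ) = ((2:ℕ):ℝ) by norm_num, Real.rpow_natCast, sq_abs]
  have hsq4 : ∀ a : ℝ, (a ^ 2) ^ (2:ℝ) = a ^ 4 := fun a => by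
    rw [show (2:ℝ) = ((2:ℕ):ℝ) by norm_num, Real.rpow_natCast, ← pow_mul]
  -- notation
  set D := ∫ x, y' x ^ 2 ∂μ with hDdef
  set S := ∫ x, y x ^ 2 ∂μ with hSdef
  set V := ∫ x, (y x ^ 2 + y' x ^ 2) ∂μ with hVdef
  set W := ∫ x, w x ^ 4 ∂μ with hWdef
  set Y := ∫ x, y x ^ 4 ∂μ with hYdef
  set P := ∫ x, y x ^ 2 * w x ^ 2 ∂μ with hPdef
  have hD : 0 ≤ D := integral_nonneg fun x => sq_nonneg _
  have hS : 0 ≤ S := integral_nonneg fun x => sq_nonneg _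
  have hV : 0 ≤ V := integral_nonneg fun x => by positivity
  have hW : 0 ≤ W := integral_nonneg fun x => by positivity
  have hY : 0 ≤ Y := integral_nonneg fun x => by positivity
  have hP : 0 ≤ P := integral_nonneg fun x => by positivity
  -- first Cauchy–Schwarz
  have hCS1 : ∫ x, |y' x| * |y x * w x| ∂μ ≤ D ^ ((1:ℝ)/2) * P ^ ((1:ℝ)/2) := by
    have h := MeasureTheory.integral_mul_le_Lp_mul_Lq_of_nonneg conj
      (MeasureTheory.ae_of_all _ fun x => abs_nonneg (y' x))
      (MeasureTheory.ae_of_all _ fun x => abs_nonneg (y x * w x))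
      (memLp _ hy'.abs _) (memLp _ ((hycont.mul hw).abs) _)
    simpa [habs2, mul_pow] using h
  -- second Cauchy–Schwarz
  have hCS2 : P ≤ Y ^ ((1:ℝ)/2) * W ^ ((1:ℝ)/2) := by
    have h := MeasureTheory.integral_mul_le_Lp_mul_Lq_of_nonneg conj
      (MeasureTheory.ae_of_all _ fun x => sq_nonneg (y x))
      (MeasureTheory.ae_of_all _ fun x => sq_nonneg (w x))
      (memLp _ (hycont.pow 2) _) (memLp _ (hw.pow 2) _)
    simpa [hsq4] using h
  -- D ≤ V
  have hDV : D ≤ V := by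
    refine integral_mono
      (memLp_one_iff_integrable.1 (memLp _ (hy'.pow 2) 1))
      (memLp_one_iff_integrable.1 (memLp _ ((hycont.pow 2).add (hy'.pow 2)) 1))
      fun x => by nlinarith [sq_nonneg (y x)]
  -- rewrite interval integrals as set integrals
  simp only [intervalIntegral.integral_of_le hll] at hinterp ⊢
  have hinterp' : Y ^ ((1:ℝ)/4) ≤ C * S ^ ((1:ℝ)/4) * V ^ ((1:ℝ)/4) := hinterp
  -- abs of integral
  have hT : |∫ x, y x * y' x * w x ∂μ| ≤ ∫ x, |y' x| * |y x * w x| ∂μ := by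
    have h1 : |∫ x, y x * y' x * w x ∂μ| ≤ ∫ x, |y x * y' x * w x| ∂μ := by
      simpa only [Real.norm_eq_abs] using norm_integral_le_integral_norm (fun x => y x * y' x * w x) (μ := μ)
    have h2 : (fun x => |y x * y' x * w x|) = fun x => |y' x| * |y x * w x| :=
      funext fun x => by rw [show y x * y' x * w x = y' x * (y x * w x) by ring, abs_mul]
    rw [h2] at h1; exact h1
  -- Young's inequality
  have young : V ^ ((3:ℝ)/4) * (S * W) ^ ((1:ℝ)/4) ≤ 3/4 * V + 1/4 * (S * W) := by
    have h := Real.young_inequality_of_nonneg (Real.rpow_nonneg hV ((3:ℝ)/4))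
      (Real.rpow_nonneg (mul_nonneg hS hW) ((1:ℝ)/4))
      (Real.holderConjugate_iff.2 ⟨by norm_num, by norm_num⟩ : Real.HolderConjugate (4/3) 4)
    have e1 : (V ^ ((3:ℝ)/4)) ^ ((4:ℝ)/3) = V := by
      rw [← Real.rpow_mul hV]; norm_num
    have e2 : ((S * W) ^ ((1:ℝ)/4)) ^ (4:ℝ) = S * W := by
      rw [← Real.rpow_mul (mul_nonneg hS hW)]; norm_num
    rw [e1, e2] at h
    linarith
  have e3 : (Y ^ ((1:ℝ)/2) * W ^ ((1:ℝ)/2)) ^ ((1:ℝ)/2)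
      = Y ^ ((1:ℝ)/4) * W ^ ((1:ℝ)/4) := by
    rw [Real.mul_rpow (Real.rpow_nonneg hY _) (Real.rpow_nonneg hW _),
      ← Real.rpow_mul hY, ← Real.rpow_mul hW]; norm_num
  have e4 : V ^ ((1:ℝ)/2) * V ^ ((1:ℝ)/4) = V ^ ((3:ℝ)/4) := by
    rw [← Real.rpow_add_of_nonneg hV (by norm_num) (by norm_num)]; norm_num
  calc |∫ x, y x * y' x * w x ∂μ|
      ≤ ∫ x, |y' x| * |y x * w x| ∂μ := hT
    _ ≤ D ^ ((1:ℝ)/2) * P ^ ((1:ℝ)/2) := hCS1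
    _ ≤ D ^ ((1:ℝ)/2) * (Y ^ ((1:ℝ)/2) * W ^ ((1:ℝ)/2)) ^ ((1:ℝ)/2) := by
        exact mul_le_mul_of_nonneg_left (Real.rpow_le_rpow hP hCS2 (by norm_num))
          (Real.rpow_nonneg hD _)
    _ = D ^ ((1:ℝ)/2) * (Y ^ ((1:ℝ)/4) * W ^ ((1:ℝ)/4)) := by rw [e3]
    _ ≤ D ^ ((1:ℝ)/2) * ((C * S ^ ((1:ℝ)/4) * V ^ ((1:ℝ)/4)) * W ^ ((1:ℝ)/4)) := by
        refine mul_le_mul_of_nonneg_left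
          (mul_le_mul_of_nonneg_right hinterp' (Real.rpow_nonneg hW _))
          (Real.rpow_nonneg hD _)
    _ ≤ V ^ ((1:ℝ)/2) * ((C * S ^ ((1:ℝ)/4) * V ^ ((1:ℝ)/4)) * W ^ ((1:ℝ)/4)) := by
        refine mul_le_mul_of_nonneg_right (Real.rpow_le_rpow hD hDV (by norm_num)) ?_
        have := Real.rpow_nonneg hS ((1:ℝ)/4)
        have := Real.rpow_nonneg hV ((1:ℝ)/4)
        have := Real.rpow_nonneg hW ((1:ℝ)/4)
        positivity
    _ = C * (V ^ ((3:ℝ)/4) * (S * W) ^ ((1:ℝ)/4)) := by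
        rw [Real.mul_rpow hS hW, ← e4]; ring
    _ ≤ C * (3/4 * V + 1/4 * (S * W)) :=
        mul_le_mul_of_nonneg_left young hC.le
    _ = 3 * C / 4 * V + C / 4 * S * W := by ring
end
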